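/- arXiv:math/0210354 — 4 statements merged into one kernel-verified Lean document; each statement's English description precedes it below -/
import Mathlib

section
/- Let G be an ω-precompact, sequentially h-complete topological group. Then every continuous surjective homomorphism f : G → H onto a Hausdorff topological group H of countable pseudocharacter is open. -/
/-!
Guran's argument: in an ω-narrow group, below any countably many neighbourhoods of `1` there is a
sequence `W n` that is a neighbourhood base at `1` for a coarser group topology. Applied in `H`
below the sets witnessing countable pseudocharacter, it gives a coarser Hausdorff first-countable
group topology `M` on `H`. As a continuous image of `G`, `M` is sequentially complete, hence
complete and Baire, so ω-precompactness of `G` makes every `closure (f '' V)` a neighbourhood of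
`1` in `M`. Applied in `G` below a neighbourhood `U` of `1` and the preimages of the basic sets of
`M`, it gives a coarser first-countable group topology `G'` on `G` whose Hausdorff quotient is
again an image of `G`. So `G'` is sequentially complete, and the successive approximation argument
of the Banach open mapping theorem shows that `f '' U` contains a basic neighbourhood of `1` in
`M`, which is a neighbourhood of `1` in `H`.
-/

open Topology Pointwise

universe u

section Defs
variable (G : Type u) [Group G] [TopologicalSpace G] [IsTopologicalGroup G]

/-- Sequential completeness w.r.t. the canonical group uniformity. -/
def SeqComplete : Prop :=
  letI := IsTopologicalGroup.rightUniformSpace G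
  ∀ u : ℕ → G, CauchySeq u → ∃ x, Filter.Tendsto u Filter.atTop (𝓝 x)

/-- `G` is sequentially h-complete: every continuous homomorphic image is
sequentially complete. -/
def SeqHComplete : Prop :=
  ∀ (H : Type u) [Group H] [TopologicalSpace H] [IsTopologicalGroup H] [T2Space H]
    (f : G →* H), Continuous f → Function.Surjective f → SeqComplete H

/-- `G` is ω-precompact. -/
def OmegaPrecompact : Prop :=
  ∀ U ∈ 𝓝 (1 : G), ∃ F : Set G, F.Countable ∧ U * F = Set.univ

/-- `G` has countable pseudocharacter. -/
def CountablePseudocharacter : Prop :=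
  ∃ s : ℕ → Set G, (∀ n, IsOpen (s n)) ∧ (⋂ n, s n) = ({1} : Set G)

/-- `G` is precompact. -/
def GroupPrecompact : Prop :=
  ∀ U ∈ 𝓝 (1 : G), ∃ F : Set G, F.Finite ∧ U * F = Set.univ

/-- `G` is h-complete: every continuous homomorphic image is complete. -/
def HComplete : Prop :=
  ∀ (H : Type u) [Group H] [TopologicalSpace H] [IsTopologicalGroup H] [T2Space H]
    (f : G →* H), Continuous f → Function.Surjective f →
      letI := IsTopologicalGroup.rightUniformSpace H
      CompleteSpace H

/-- `G` is maximally almost periodic. -/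
def MAP : Prop :=
  ∃ (K : Type u) (_ : Group K) (_ : TopologicalSpace K),
    ∃ (_ : IsTopologicalGroup K) (_ : T2Space K) (_ : CompactSpace K),
      ∃ f : G →* K, Continuous f ∧ Function.Injective f

/-- `G` is minimally almost periodic. -/
def MinAP : Prop :=
  ∀ (K : Type u) [Group K] [TopologicalSpace K] [IsTopologicalGroup K] [T2Space K]
    [CompactSpace K] (f : G →* K), Continuous f → ∀ g : G, f g = 1

/-- `G` is c-compact. -/
def CCompact : Prop :=
  ∀ (H : Type u) [Group H] [TopologicalSpace H] [IsTopologicalGroup H] [T2Space H]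
    (S : Subgroup (G × H)), IsClosed (S : Set (G × H)) →
      IsClosed ((S.map (MonoidHom.snd G H) : Subgroup H) : Set H)

/-- `G` is totally minimal. -/
def TotallyMinimal : Prop :=
  ∀ (H : Type u) [Group H] [TopologicalSpace H] [IsTopologicalGroup H] [T2Space H]
    (f : G →* H), Continuous f → Function.Surjective f → IsOpenMap f

/-- `G` is minimal. -/
def MinimalGroup : Prop :=
  ∀ (H : Type u) [Group H] [TopologicalSpace H] [IsTopologicalGroup H] [T2Space H]
    (f : G →* H), Continuous f → Function.Bijective f → IsOpenMap f

end Defs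

/-- `X` has a countable network. -/
def HasCountableNetwork (X : Type u) [TopologicalSpace X] : Prop :=
  ∃ N : Set (Set X), N.Countable ∧ ∀ U : Set X, IsOpen U → ∃ S ⊆ N, ⋃₀ S = U

open Filter Set Function

section OmegaNarrow

variable {G : Type*} [Group G] [TopologicalSpace G]

theorem OmegaPrecompact.of_surjective {H : Type*} [Group H] [TopologicalSpace H]
    (hG : OmegaPrecompact G) (f : G →* H) (hf : Continuous f) (hsurj : Surjective f) :
    OmegaPrecompact H := by
  intro V hV
  obtain ⟨F, hF, hcover⟩ := hG (f ⁻¹' V) (hf.tendsto' 1 1 f.map_one hV)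
  refine ⟨f '' F, hF.image f, ?_⟩
  rw [← image_preimage_eq V hsurj, ← image_mul, hcover, image_univ_of_surjective hsurj]

variable (G) in
def OmegaBalanced : Prop :=
  ∀ U ∈ 𝓝 (1 : G), ∃ V : ℕ → Set G, (∀ k, V k ∈ 𝓝 1) ∧ ∀ x, ∃ k, ∀ v ∈ V k, x * v * x⁻¹ ∈ U

theorem OmegaPrecompact.omegaBalanced [IsTopologicalGroup G] (hG : OmegaPrecompact G) :
    OmegaBalanced G := by
  intro U hU
  obtain ⟨W₀, hW₀, hW₀U⟩ := exists_nhds_one_split4 hU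
  set W := W₀ ∩ W₀⁻¹
  have hW : W ∈ 𝓝 (1 : G) := inter_mem hW₀ (inv_mem_nhds_one G hW₀)
  obtain ⟨F, hF, hcover⟩ := hG W hW
  obtain ⟨c, hc⟩ := countable_iff_exists_subset_range.1 hF
  refine ⟨fun k ↦ (fun v ↦ c k * v * (c k)⁻¹) ⁻¹' W, fun k ↦ ?_, fun x ↦ ?_⟩
  · exact ((continuous_const_mul _).mul continuous_const).tendsto' 1 1 (by simp) hW
  · obtain ⟨w, hw, _, hcF, rfl⟩ : x ∈ W * F := hcover ▸ mem_univ x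
    obtain ⟨k, rfl⟩ := hc hcF
    refine ⟨k, fun v hv ↦ ?_⟩
    have hconj : w * c k * v * (w * c k)⁻¹ = w * (c k * v * (c k)⁻¹) * w⁻¹ * 1 := by group
    rw [hconj]
    exact hW₀U hw.1 hv.1 hw.2 (mem_of_mem_nhds hW₀)

structure IsGroupNhdsSeq (W : ℕ → Set G) : Prop where
  one_mem : ∀ n, (1 : G) ∈ W n
  inv_eq : ∀ n, (W n)⁻¹ = W n
  mul_subset : ∀ n, W (n + 1) * W (n + 1) ⊆ W n
  conj_subset : ∀ x n, ∃ m, ∀ w ∈ W m, x * w * x⁻¹ ∈ W n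

theorem OmegaBalanced.exists_isGroupNhdsSeq [IsTopologicalGroup G] (hG : OmegaBalanced G)
    {T : ℕ → Set G} (hT : ∀ n, T n ∈ 𝓝 1) :
    ∃ W : ℕ → Set G, IsGroupNhdsSeq W ∧ (∀ n, W n ∈ 𝓝 1) ∧ ∀ n, W n ⊆ T n := by
  choose! half half_mem _ half_inv half_mul using
    fun U (hU : U ∈ 𝓝 (1 : G)) ↦ exists_closed_nhds_one_inv_eq_mul_subset hU
  choose! bal bal_mem bal_conj using hG
  /- `S (n + 1) = (W n, C)` with `C k = ⋂ i ≤ n, bal (W i) k`. Requiring `W m ⊆ C k` for `k < m`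
  puts every `W m` with `m > i, k` inside `bal (W i) k`, which gives the conjugation property. -/
  let step (n : ℕ) (S : Set G × (ℕ → Set G)) : Set G × (ℕ → Set G) :=
    let V := half (S.1 ∩ T n ∩ ⋂ k < n, S.2 k)
    (V, fun k ↦ S.2 k ∩ bal V k)
  let S (n : ℕ) : Set G × (ℕ → Set G) := Nat.rec (univ, fun _ ↦ univ) step n
  let arg (n : ℕ) : Set G := (S n).1 ∩ T n ∩ ⋂ k < n, (S n).2 k
  let W (n : ℕ) : Set G := (S (n + 1)).1
  have harg_nhds_of {n : ℕ} (h : (S n).1 ∈ 𝓝 1 ∧ ∀ k, (S n).2 k ∈ 𝓝 1) : arg n ∈ 𝓝 1 :=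
    inter_mem (inter_mem h.1 (hT n)) ((biInter_mem (finite_lt_nat n)).2 fun k _ ↦ h.2 k)
  have hS_nhds (n : ℕ) : (S n).1 ∈ 𝓝 1 ∧ ∀ k, (S n).2 k ∈ 𝓝 (1 : G) := by
    induction n with
    | zero => exact ⟨univ_mem, fun _ ↦ univ_mem⟩
    | succ n ih =>
      have hV := half_mem _ (harg_nhds_of ih)
      exact ⟨hV, fun k ↦ inter_mem (ih.2 k) (bal_mem _ hV k)⟩
  have harg_nhds (n : ℕ) : arg n ∈ 𝓝 1 := harg_nhds_of (hS_nhds n)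
  have hW_nhds (n : ℕ) : W n ∈ 𝓝 1 := half_mem _ (harg_nhds n)
  have hW_sub_arg (n : ℕ) : W n ⊆ arg n :=
    (subset_mul_left _ (mem_of_mem_nhds (hW_nhds n))).trans (half_mul _ (harg_nhds n))
  have hS_bal (n i : ℕ) (hi : i < n) (k : ℕ) : (S n).2 k ⊆ bal (W i) k := by
    induction n with
    | zero => exact absurd hi (Nat.not_lt_zero i)
    | succ n ih =>
      rcases Nat.lt_succ_iff_lt_or_eq.1 hi with hi | rfl
      · exact inter_subset_left.trans (ih hi)
      · exact inter_subset_right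
  refine ⟨W, ⟨fun n ↦ mem_of_mem_nhds (hW_nhds n), fun n ↦ half_inv _ (harg_nhds n),
    fun n ↦ (half_mul _ (harg_nhds (n + 1))).trans (inter_subset_left.trans inter_subset_left),
    fun x i ↦ ?_⟩, hW_nhds,
    fun n ↦ (hW_sub_arg n).trans (inter_subset_left.trans inter_subset_right)⟩
  obtain ⟨k, hk⟩ := bal_conj (W i) (hW_nhds i) x
  refine ⟨i + k + 1, fun w hw ↦ hk w ?_⟩
  have hw' : w ∈ (S (i + k + 1)).2 k :=
    mem_iInter₂.1 (hW_sub_arg (i + k + 1) hw).2 k (by omega)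
  exact hS_bal (i + k + 1) i (by omega) k hw'

theorem CountablePseudocharacter.exists_isGroupNhdsSeq [IsTopologicalGroup G]
    (hψ : CountablePseudocharacter G) (hG : OmegaBalanced G) :
    ∃ O : ℕ → Set G, IsGroupNhdsSeq O ∧ (∀ n, O n ∈ 𝓝 1) ∧ ∀ x, (∀ n, x ∈ O n) → x = 1 := by
  obtain ⟨s, hs_open, hs_inter⟩ := hψ
  have hs_one (n : ℕ) : (1 : G) ∈ s n := mem_iInter.1 (hs_inter.symm ▸ rfl : (1 : G) ∈ ⋂ n, s n) n
  obtain ⟨O, hO, hO_nhds, hO_sub⟩ :=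
    hG.exists_isGroupNhdsSeq fun n ↦ (hs_open n).mem_nhds (hs_one n)
  refine ⟨O, hO, hO_nhds, fun x hx ↦ ?_⟩
  simpa [hs_inter] using mem_iInter.2 fun n ↦ hO_sub n (hx n)

end OmegaNarrow

section ShrinkingSequences

variable {G : Type*} [Group G]

theorem antitone_of_mul_subset {W : ℕ → Set G} (hone : ∀ n, (1 : G) ∈ W n)
    (hmul : ∀ n, W (n + 1) * W (n + 1) ⊆ W n) : Antitone W :=
  antitone_nat_of_succ_le fun n ↦ (subset_mul_left _ (hone _)).trans (hmul n)

theorem mul_inv_mem_of_forall_succ {W : ℕ → Set G} (hone : ∀ n, (1 : G) ∈ W n)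
    (hmul : ∀ n, W (n + 1) * W (n + 1) ⊆ W n) {p : ℕ → G}
    (hp : ∀ m, p (m + 1) * (p m)⁻¹ ∈ W (m + 1)) (j d : ℕ) : p (j + d) * (p j)⁻¹ ∈ W j := by
  induction d generalizing j with
  | zero => simpa using hone j
  | succ d ih =>
    have hsplit : p (j + (d + 1)) * (p j)⁻¹ =
        p (j + 1 + d) * (p (j + 1))⁻¹ * (p (j + 1) * (p j)⁻¹) := by
      rw [Nat.add_right_comm, Nat.add_assoc]; group
    rw [hsplit]
    exact hmul j (mul_mem_mul (ih (j + 1)) (hp j))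

end ShrinkingSequences

namespace IsGroupNhdsSeq

variable {G : Type*} [Group G] {W : ℕ → Set G}

theorem inv_mem (hW : IsGroupNhdsSeq W) {n : ℕ} {x : G} (hx : x ∈ W n) : x⁻¹ ∈ W n :=
  hW.inv_eq n ▸ inv_mem_inv.2 hx

theorem antitone (hW : IsGroupNhdsSeq W) : Antitone W :=
  antitone_of_mul_subset hW.one_mem hW.mul_subset

abbrev toGroupFilterBasis (hW : IsGroupNhdsSeq W) : GroupFilterBasis G where
  sets := range W
  nonempty := range_nonempty W
  inter_sets := by
    rintro _ _ ⟨m, rfl⟩ ⟨n, rfl⟩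
    exact ⟨W (max m n), mem_range_self _,
      subset_inter (hW.antitone (le_max_left m n)) (hW.antitone (le_max_right m n))⟩
  one' := by
    rintro _ ⟨n, rfl⟩
    exact hW.one_mem n
  mul' := by
    rintro _ ⟨n, rfl⟩
    exact ⟨W (n + 1), mem_range_self _, hW.mul_subset n⟩
  inv' := by
    rintro _ ⟨n, rfl⟩
    exact ⟨W n, mem_range_self _, fun x hx ↦ hW.inv_mem hx⟩
  conj' := by
    rintro x _ ⟨n, rfl⟩
    obtain ⟨m, hm⟩ := hW.conj_subset x n
    exact ⟨W m, mem_range_self _, hm⟩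

end IsGroupNhdsSeq

def WithGroupFilterBasis {G : Type*} [Group G] (_ : GroupFilterBasis G) : Type _ := G

namespace WithGroupFilterBasis

variable {G : Type*} [Group G] (B : GroupFilterBasis G)

instance : Group (WithGroupFilterBasis B) := inferInstanceAs (Group G)

instance : TopologicalSpace (WithGroupFilterBasis B) := B.topology

instance : IsTopologicalGroup (WithGroupFilterBasis B) := B.isTopologicalGroup

theorem nhds_one_hasBasis_of_isGroupNhdsSeq {W : ℕ → Set G} (hW : IsGroupNhdsSeq W) :
    (𝓝 (1 : WithGroupFilterBasis hW.toGroupFilterBasis)).HasBasis (fun _ ↦ True) W :=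
  hW.toGroupFilterBasis.nhds_one_hasBasis.to_hasBasis (fun _ ⟨n, hn⟩ ↦ ⟨n, trivial, hn.le⟩)
    fun n _ ↦ ⟨W n, mem_range_self n, le_rfl⟩

variable {W : ℕ → Set G} (hW : IsGroupNhdsSeq W)

theorem continuous_of_isGroupNhdsSeq {K : Type*} [Group K] [TopologicalSpace K]
    [IsTopologicalGroup K] (φ : K →* WithGroupFilterBasis hW.toGroupFilterBasis)
    (hφ : ∀ n, φ ⁻¹' W n ∈ 𝓝 1) : Continuous φ :=
  continuous_of_continuousAt_one φ <| by
    rw [ContinuousAt, map_one, (nhds_one_hasBasis_of_isGroupNhdsSeq hW).tendsto_right_iff]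
    exact fun n _ ↦ hφ n

theorem t2Space_of_isGroupNhdsSeq (h : ∀ x, (∀ n, x ∈ W n) → x = 1) :
    T2Space (WithGroupFilterBasis hW.toGroupFilterBasis) :=
  IsTopologicalGroup.t2Space_of_one_sep fun x hx ↦ by
    obtain ⟨n, hn⟩ : ∃ n, x ∉ W n := not_forall.1 (mt (h x) hx)
    exact ⟨W n, (nhds_one_hasBasis_of_isGroupNhdsSeq hW).mem_of_mem trivial, hn⟩

end WithGroupFilterBasis

section RightUniformity

open Uniformity

attribute [local instance] IsTopologicalGroup.rightUniformSpace

variable {G : Type*} [Group G] [TopologicalSpace G] [IsTopologicalGroup G]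

theorem SeqComplete.of_isInducing {K : Type*} [Group K] [TopologicalSpace K]
    [IsTopologicalGroup K] (hK : SeqComplete K) (φ : G →* K) (hφ : IsInducing φ)
    (hsurj : Surjective φ) : SeqComplete G := by
  intro u hu
  have hφu : UniformContinuous φ := by
    simp only [UniformContinuous, uniformity_eq_comap_nhds_one', tendsto_comap_iff]
    refine ((hφ.continuous.tendsto' 1 1 φ.map_one).comp tendsto_comap).congr fun p ↦ ?_
    simp
  obtain ⟨x, hx⟩ := hK _ (hφu.comp_cauchySeq hu)
  obtain ⟨x, rfl⟩ := hsurj x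
  exact ⟨x, hφ.tendsto_nhds_iff.2 hx⟩

theorem SeqComplete.baireSpace [(𝓝 (1 : G)).IsCountablyGenerated] (h : SeqComplete G) :
    BaireSpace G := by
  have : (𝓤 G).IsCountablyGenerated := by
    rw [uniformity_eq_comap_nhds_one']
    infer_instance
  have : CompleteSpace G := UniformSpace.complete_of_cauchySeq_tendsto h
  infer_instance

theorem cauchySeq_of_mul_inv_mem {W : ℕ → Set G} (hW : (𝓝 (1 : G)).HasBasis (fun _ ↦ True) W)
    (hinv : ∀ n, (W n)⁻¹ = W n) {u : ℕ → G} (hu : ∀ j d, u (j + d) * (u j)⁻¹ ∈ W j) :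
    CauchySeq u := by
  rw [(uniformity_eq_comap_nhds_one' G ▸ hW.comap _ :).cauchySeq_iff']
  refine fun j _ ↦ ⟨j, fun n hn ↦ ?_⟩
  obtain ⟨d, rfl⟩ := Nat.exists_eq_add_of_le hn
  rw [mem_preimage, ← hinv j, Set.mem_inv, mul_inv_rev, inv_inv]
  exact hu j d

end RightUniformity

section SeqHComplete

variable {G : Type u} [Group G] [TopologicalSpace G] [IsTopologicalGroup G]

theorem SeqHComplete.seqComplete_withGroupFilterBasis (hs : SeqHComplete G) {W : ℕ → Set G}
    (hW : IsGroupNhdsSeq W) (hW_nhds : ∀ n, W n ∈ 𝓝 1) :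
    SeqComplete (WithGroupFilterBasis hW.toGroupFilterBasis) := by
  let G' := WithGroupFilterBasis hW.toGroupFilterBasis
  let ι : G →* G' := MonoidHom.id G
  have hι : Continuous ι := WithGroupFilterBasis.continuous_of_isGroupNhdsSeq hW ι hW_nhds
  exact (hs _ ((SeparationQuotient.mkMonoidHom (M := G')).comp ι)
    ((SeparationQuotient.continuous_mk (X := G')).comp hι)
    (SeparationQuotient.surjective_mk (X := G'))).of_isInducing SeparationQuotient.mkMonoidHom
      SeparationQuotient.isInducing_mk SeparationQuotient.surjective_mk

theorem SeqHComplete.baireSpace_withGroupFilterBasis {H : Type u} [Group H] (hs : SeqHComplete G)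
    {O : ℕ → Set H} (hO : IsGroupNhdsSeq O) [T2Space (WithGroupFilterBasis hO.toGroupFilterBasis)]
    (f : G →* WithGroupFilterBasis hO.toGroupFilterBasis) (hf : ∀ n, f ⁻¹' O n ∈ 𝓝 1)
    (hsurj : Surjective f) : BaireSpace (WithGroupFilterBasis hO.toGroupFilterBasis) :=
  have := (WithGroupFilterBasis.nhds_one_hasBasis_of_isGroupNhdsSeq hO).isCountablyGenerated
  (hs _ f (WithGroupFilterBasis.continuous_of_isGroupNhdsSeq hO f hf) hsurj).baireSpace

end SeqHComplete

section OpenMapping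

variable {G M : Type*} [Group G] [TopologicalSpace G] [IsTopologicalGroup G]
  [Group M] [TopologicalSpace M] [IsTopologicalGroup M]

theorem exists_mul_inv_mem_of_mem_closure {s N : Set M} {z : M} (hz : z ∈ closure s)
    (hN : N ∈ 𝓝 1) : ∃ x ∈ s, z * x⁻¹ ∈ N := by
  obtain ⟨x, hx, hxz⟩ := mem_closure_iff_nhds_one.1 hz _ (inv_mem_nhds_one M hN)
  exact ⟨x, hx, by simpa [div_eq_mul_inv] using hxz⟩

theorem OmegaPrecompact.closure_image_mem_nhds_one [BaireSpace M] (hG : OmegaPrecompact G)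
    (f : G →* M) (hsurj : Surjective f) {V : Set G} (hV : V ∈ 𝓝 1) :
    closure (f '' V) ∈ 𝓝 1 := by
  obtain ⟨W, hW, -, hWinv, hWV⟩ := exists_closed_nhds_one_inv_eq_mul_subset hV
  obtain ⟨F, hF, hcover⟩ := hG W hW
  have : Countable F := hF.to_subtype
  obtain ⟨c, hc⟩ : ∃ c : F, (interior (MulOpposite.op (f c) • closure (f '' W))).Nonempty := by
    refine nonempty_interior_of_iUnion_of_closed (fun c ↦ isClosed_closure.smul _)
      (eq_univ_of_forall fun y ↦ ?_)
    obtain ⟨x, rfl⟩ := hsurj y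
    obtain ⟨w, hw, c, hcF, rfl⟩ : x ∈ W * F := hcover ▸ mem_univ x
    refine mem_iUnion.2 ⟨⟨c, hcF⟩, ?_⟩
    rw [map_mul, ← op_smul_eq_mul]
    exact smul_mem_smul_set (subset_closure (mem_image_of_mem f hw))
  rw [interior_smul, smul_set_nonempty] at hc
  obtain ⟨p, hp⟩ := hc
  refine mem_of_superset ((continuous_const_mul p).tendsto' 1 p (mul_one p)
    (isOpen_interior.mem_nhds hp)) fun z hz ↦ ?_
  have hz' := map_mem_closure₂ (f := fun a b : M ↦ a⁻¹ * b) (u := f '' V) (by fun_prop)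
    (interior_subset hp) (interior_subset hz) ?_
  · simpa using hz'
  · rintro _ ⟨w₁, hw₁, rfl⟩ _ ⟨w₂, hw₂, rfl⟩
    exact ⟨w₁⁻¹ * w₂, hWV (mul_mem_mul (hWinv ▸ inv_mem_inv.2 hw₁) hw₂), by simp⟩

/-- The open mapping argument: approximate `y` by `f (p m)` with
`p (m + 1) * (p m)⁻¹ ∈ W (k + m + 2)`, so that `p` is Cauchy and its limit `x ∈ W k` has
`f x = y`. -/
theorem closure_image_subset_image_of_seqComplete [T2Space M] (hG : SeqComplete G)
    {W : ℕ → Set G} (hW : (𝓝 (1 : G)).HasBasis (fun _ ↦ True) W) (hinv : ∀ n, (W n)⁻¹ = W n)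
    (hmul : ∀ n, W (n + 1) * W (n + 1) ⊆ W n) (f : G →* M) (hf : Continuous f)
    (hfW : ∀ n, closure (f '' W n) ∈ 𝓝 1) (k : ℕ) :
    closure (f '' W (k + 2)) ⊆ f '' W k := by
  intro y hy
  have hone (n : ℕ) : (1 : G) ∈ W n := mem_of_mem_nhds (hW.mem_of_mem trivial)
  have hanti := antitone_of_mul_subset hone hmul
  have hstep (n : ℕ) (z : M) (hz : z ∈ closure (f '' W n)) :
      ∃ w ∈ W n, z * (f w)⁻¹ ∈ closure (f '' W (n + 1)) := by
    obtain ⟨_, ⟨w, hw, rfl⟩, hzw⟩ := exists_mul_inv_mem_of_mem_closure hz (hfW (n + 1))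
    exact ⟨w, hw, hzw⟩
  choose! g hgW hg using hstep
  let p : ℕ → G := fun m ↦ Nat.rec 1 (fun m q ↦ g (k + 1 + (m + 1)) (y * (f q)⁻¹) * q) m
  have hp_succ_eq (m : ℕ) : p (m + 1) = g (k + 1 + (m + 1)) (y * (f (p m))⁻¹) * p m := rfl
  have hp_cl (m : ℕ) : y * (f (p m))⁻¹ ∈ closure (f '' W (k + 1 + (m + 1))) := by
    induction m with
    | zero => simpa [p] using hy
    | succ m ih =>
      rw [hp_succ_eq, map_mul, mul_inv_rev, ← mul_assoc]
      exact hg _ _ ih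
  have hp_succ (m : ℕ) : p (m + 1) * (p m)⁻¹ ∈ W (k + 1 + (m + 1)) := by
    rw [hp_succ_eq, mul_inv_cancel_right]
    exact hgW _ _ (hp_cl m)
  have hp_diff := mul_inv_mem_of_forall_succ (W := fun j ↦ W (k + 1 + j)) (fun _ ↦ hone _)
    (fun _ ↦ hmul _) hp_succ
  obtain ⟨x, hx⟩ := hG p (cauchySeq_of_mul_inv_mem hW hinv fun j d ↦
    hanti (by omega) (hp_diff j d))
  have hx_cl : x ∈ closure (W (k + 1)) :=
    mem_closure_of_tendsto hx (Eventually.of_forall fun m ↦ by simpa [p] using hp_diff 0 m)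
  obtain ⟨w, hw, hxw⟩ :=
    exists_mul_inv_mem_of_mem_closure hx_cl (hW.mem_of_mem (i := k + 1) trivial)
  refine ⟨x, hmul k (by simpa using mul_mem_mul hxw hw), tendsto_nhds_unique
    ((hf.tendsto x).comp hx) ?_⟩
  have hz : Tendsto (fun m ↦ y * (f (p m))⁻¹) atTop (𝓝 1) := by
    refine (closed_nhds_basis 1).tendsto_right_iff.2 fun C ⟨hC, hC_closed⟩ ↦ ?_
    obtain ⟨i, -, hi⟩ := hW.mem_iff.1 (hf.tendsto' 1 1 f.map_one hC)
    filter_upwards [eventually_ge_atTop i] with m hm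
    exact closure_minimal (image_subset_iff.2 ((hanti (by omega)).trans hi)) hC_closed (hp_cl m)
  simpa [Function.comp_def] using hz.inv.mul_const y

end OpenMapping

theorem stmt0_general (G : Type u) [Group G] [TopologicalSpace G] [IsTopologicalGroup G]
    (hω : OmegaPrecompact G) (hs : SeqHComplete G)
    (H : Type u) [Group H] [TopologicalSpace H] [IsTopologicalGroup H]
    (hψ : CountablePseudocharacter H)
    (f : G →* H) (hf : Continuous f) (hsurj : Function.Surjective f) :
    IsOpenMap f := by
  rw [IsTopologicalGroup.isOpenMap_iff_nhds_one, le_map_iff]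
  intro U hU
  obtain ⟨O, hO, hO_nhds, hO_sep⟩ :=
    hψ.exists_isGroupNhdsSeq (hω.of_surjective f hf hsurj).omegaBalanced
  obtain ⟨W, hW, hW_nhds, hW_sub⟩ := hω.omegaBalanced.exists_isGroupNhdsSeq
    (T := fun n ↦ U ∩ f ⁻¹' O n) fun n ↦ inter_mem hU (hf.tendsto' 1 1 f.map_one (hO_nhds n))
  let M := WithGroupFilterBasis hO.toGroupFilterBasis
  let G' := WithGroupFilterBasis hW.toGroupFilterBasis
  have hM := WithGroupFilterBasis.nhds_one_hasBasis_of_isGroupNhdsSeq hO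
  have hG' := WithGroupFilterBasis.nhds_one_hasBasis_of_isGroupNhdsSeq hW
  have : T2Space M := WithGroupFilterBasis.t2Space_of_isGroupNhdsSeq hO hO_sep
  let fM : G →* M := f
  have : BaireSpace M := hs.baireSpace_withGroupFilterBasis hO fM
    (fun n ↦ hf.tendsto' 1 1 f.map_one (hO_nhds n)) hsurj
  let f' : G' →* M := f
  have hf' : Continuous f' := WithGroupFilterBasis.continuous_of_isGroupNhdsSeq hO f'
    fun n ↦ mem_of_superset (hG'.mem_of_mem trivial) fun x hx ↦ (hW_sub n hx).2
  have hclosure (n : ℕ) : closure (f' '' W n) ∈ 𝓝 1 :=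
    hω.closure_image_mem_nhds_one fM hsurj (hW_nhds n)
  have key := closure_image_subset_image_of_seqComplete
    (hs.seqComplete_withGroupFilterBasis hW hW_nhds) hG' hW.inv_eq hW.mul_subset f' hf' hclosure 0
  obtain ⟨i, -, hi⟩ := hM.mem_iff.1 (hclosure 2)
  exact mem_of_superset (hO_nhds i) ((hi.trans key).trans (image_mono fun x hx ↦ (hW_sub 0 hx).1))

/-- Every continuous surjective homomorphism from an ω-precompact sequentially
h-complete group onto a Hausdorff group of countable pseudocharacter is open. -/
theorem stmt0 (G : Type u) [Group G] [TopologicalSpace G] [IsTopologicalGroup G] [T2Space G]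
    (hω : OmegaPrecompact G) (hs : SeqHComplete G)
    (H : Type u) [Group H] [TopologicalSpace H] [IsTopologicalGroup H] [T2Space H]
    (hψ : CountablePseudocharacter H)
    (f : G →* H) (hf : Continuous f) (hsurj : Function.Surjective f) :
    IsOpenMap f :=
  stmt0_general G hω hs H hψ f hf hsurj
end

section
/- Any continuous surjective homomorphism from a separable, complete, metrizable topological group onto a Baire topological group is open (Banach's Open Map Theorem for groups). -/
open Topology Pointwise

universe u

/-!
Applying the Baire property of `H` to the countably many closed sets `f d • closure (f '' V)`,
`d` in a countable dense subset of `G`, shows that `closure (f '' W)` is a neighbourhood of `1`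
for every neighbourhood `W` of `1`. Completeness of `G` then removes the closure: for
`y ∈ closure (f '' V₀)` successive approximation yields `gₙ ∈ Vₙ` with
`y / f (gₙ * ⋯ * g₀) ∈ closure (f '' Vₙ₊₁)`. Since `Vₙ₊₁ * Vₙ₊₁ ⊆ Vₙ`, these products form a
Cauchy sequence for the right uniformity, and `f` maps its limit to `y`.
-/

open Filter Set TopologicalSpace Uniformity

section TopologicalGroup

variable {G : Type*} [Group G] [TopologicalSpace G] [IsTopologicalGroup G]

theorem Dense.biUnion_smul_eq_univ {s V : Set G} (hs : Dense s) (hV : V ∈ 𝓝 1) :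
    ⋃ g ∈ s, g • V = univ := by
  refine eq_univ_of_forall fun x => ?_
  have hx : (fun y => y⁻¹ * x) ⁻¹' V ∈ 𝓝 x :=
    (continuous_inv.mul continuous_const).continuousAt.preimage_mem_nhds (by simpa using hV)
  obtain ⟨g, hgs, hgx⟩ := hs.inter_nhds_nonempty hx
  exact mem_biUnion hgs (mem_smul_set_iff_inv_smul_mem.2 hgx)

theorem div_mem_nhds_one_of_interior_nonempty {s : Set G} (hs : (interior s).Nonempty) :
    s / s ∈ 𝓝 1 := by
  obtain ⟨x, hx⟩ := hs
  exact mem_of_superset (isOpen_interior.div_left.mem_nhds ⟨x, hx, x, hx, div_self' x⟩)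
    (div_subset_div interior_subset interior_subset)

theorem closure_div_closure_subset (s t : Set G) : closure s / closure t ⊆ closure (s / t) := by
  rintro _ ⟨a, ha, b, hb, rfl⟩
  exact map_mem_closure₂ continuous_div' ha hb fun a ha b hb => div_mem_div ha hb

theorem exists_mem_div_mem_of_mem_closure {s t : Set G} {z : G} (hz : z ∈ closure s)
    (ht : t ∈ 𝓝 1) : ∃ w ∈ s, z / w ∈ t := by
  obtain ⟨w, hws, hw⟩ := mem_closure_iff_nhds_one.1 hz t⁻¹ (inv_mem_nhds_one G ht)
  exact ⟨w, hws, by simpa using hw⟩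

end TopologicalGroup

theorem Filter.HasAntitoneBasis.tendsto_of_mem_closure_image {X Y : Type*} [TopologicalSpace X]
    [TopologicalSpace Y] [RegularSpace Y] {f : X → Y} {x : X} (hf : ContinuousAt f x)
    {v : ℕ → Set X} (hv : (𝓝 x).HasAntitoneBasis v) {w : ℕ → Y}
    (hw : ∀ n, w n ∈ closure (f '' v n)) : Tendsto w atTop (𝓝 (f x)) := by
  rw [(closed_nhds_basis (f x)).tendsto_right_iff]
  rintro C ⟨hC, hCc⟩
  obtain ⟨m, hm⟩ := hv.mem_iff.1 (hf hC)
  filter_upwards [eventually_ge_atTop m] with n hn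
  exact hCc.closure_subset_iff.2 (image_subset_iff.2 ((hv.antitone hn).trans hm)) (hw n)

theorem div_mem_of_succ_div_mem {G : Type*} [Group G] {u : ℕ → Set G}
    (hmul : ∀ n, u (n + 1) * u (n + 1) ⊆ u n) (hone : ∀ n, (1 : G) ∈ u n) {x : ℕ → G}
    (hx : ∀ n, x (n + 1) / x n ∈ u (n + 1)) {m n : ℕ} (hnm : n ≤ m) : x m / x n ∈ u n :=
  Nat.decreasingInduction (fun k _ hk => hmul k ⟨_, hk, _, hx k, div_mul_div_cancel _ _ _⟩)
    (by simpa using hone m) hnm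

theorem cauchySeq_of_succ_div_mem {G : Type*} [Group G] [UniformSpace G] [IsRightUniformGroup G]
    {u : ℕ → Set G} (hu : (𝓝 1).HasAntitoneBasis u) (hmul : ∀ n, u (n + 1) * u (n + 1) ⊆ u n)
    {x : ℕ → G} (hx : ∀ n, x (n + 1) / x n ∈ u (n + 1)) : CauchySeq x := by
  have h𝓤 : (𝓤 G).HasBasis (fun _ => True) fun n => {p : G × G | p.1 / p.2 ∈ u n} := by
    rw [uniformity_eq_comap_nhds_one_swapped]
    exact hu.toHasBasis.comap _
  rw [h𝓤.cauchySeq_iff']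
  exact fun n _ => ⟨n, fun m hnm =>
    div_mem_of_succ_div_mem hmul (fun k => mem_of_mem_nhds (hu.mem k)) hx hnm⟩

namespace MonoidHom

variable {G H : Type*} [Group G] [Group H] [TopologicalSpace H] [IsTopologicalGroup H]

theorem closure_image_mem_nhds_one [TopologicalSpace G] [IsTopologicalGroup G] [SeparableSpace G]
    [BaireSpace H] (f : G →* H) (hsurj : Function.Surjective f) {W : Set G} (hW : W ∈ 𝓝 1) :
    closure (f '' W) ∈ 𝓝 1 := by
  obtain ⟨V, hV, hVW⟩ := exists_nhds_split_inv hW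
  obtain ⟨s, hsc, hsd⟩ := exists_countable_dense G
  have : Countable s := hsc.to_subtype
  have hcover : ⋃ g : s, f g • closure (f '' V) = univ := by
    refine eq_univ_of_forall fun y => ?_
    obtain ⟨x, rfl⟩ := hsurj y
    obtain ⟨g, hgs, hxg⟩ := mem_iUnion₂.1 (hsd.biUnion_smul_eq_univ hV ▸ mem_univ x)
    refine mem_iUnion.2 ⟨⟨g, hgs⟩, smul_set_mono subset_closure ?_⟩
    rw [← image_smul_distrib]
    exact mem_image_of_mem f hxg
  obtain ⟨g, hg⟩ := nonempty_interior_of_iUnion_of_closed (fun g => isClosed_closure.smul _) hcover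
  rw [interior_smul, smul_set_nonempty] at hg
  refine mem_of_superset (div_mem_nhds_one_of_interior_nonempty hg) ?_
  refine (closure_div_closure_subset _ _).trans (closure_mono ?_)
  rw [← image_div]
  exact image_mono (div_subset_iff.2 hVW)

theorem exists_seq_of_mem_closure_image [TopologicalSpace G] (f : G →* H)
    (hcl : ∀ W ∈ 𝓝 (1 : G), closure (f '' W) ∈ 𝓝 1) {v : ℕ → Set G} (hv : ∀ n, v n ∈ 𝓝 1)
    {y : H} (hy : y ∈ closure (f '' v 0)) :
    ∃ x : ℕ → G, x 0 = 1 ∧ (∀ n, x (n + 1) / x n ∈ v n) ∧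
      ∀ n, y / f (x n) ∈ closure (f '' v n) := by
  have step : ∀ n a, y / f a ∈ closure (f '' v n) →
      ∃ g ∈ v n, y / f (g * a) ∈ closure (f '' v (n + 1)) := by
    intro n a ha
    obtain ⟨_, ⟨g, hg, rfl⟩, hgy⟩ := exists_mem_div_mem_of_mem_closure ha (hcl _ (hv (n + 1)))
    exact ⟨g, hg, by rwa [map_mul, div_mul_eq_div_div_swap]⟩
  choose! next hnext using step
  let x : ℕ → G := fun n => Nat.rec 1 (fun n a => next n a * a) n
  have hx : ∀ n, y / f (x n) ∈ closure (f '' v n) := by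
    intro n
    induction n with
    | zero => simpa [x] using hy
    | succ n ih => exact (hnext n (x n) ih).2
  exact ⟨x, rfl, fun n => by simpa [x] using (hnext n (x n) (hx n)).1, hx⟩

theorem image_mem_nhds_one_of_closure_image_mem_nhds_one [UniformSpace G]
    [IsRightUniformGroup G] [CompleteSpace G] [FirstCountableTopology G] [T2Space H]
    (f : G →* H) (hf : Continuous f) (hcl : ∀ W ∈ 𝓝 (1 : G), closure (f '' W) ∈ 𝓝 1)
    {U : Set G} (hU : U ∈ 𝓝 1) : f '' U ∈ 𝓝 1 := by
  obtain ⟨C, hC, hCc, hCU⟩ := exists_mem_nhds_isClosed_subset hU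
  obtain ⟨u, hu, hmul⟩ := IsTopologicalGroup.exists_antitone_basis_nhds_one G
  obtain ⟨N, hN⟩ := hu.mem_iff.1 hC
  let v : ℕ → Set G := fun n => u (n + N)
  have hv : (𝓝 1).HasAntitoneBasis v :=
    hu.comp_mono (fun _ _ h => by omega) (tendsto_add_atTop_nat N)
  have hvmul : ∀ n, v (n + 1) * v (n + 1) ⊆ v n := fun n => by
    simpa [v, Nat.add_right_comm] using hmul (n + N)
  refine mem_of_superset (hcl _ (hv.mem 1)) fun y hy => ?_
  obtain ⟨x, hx0, hxstep, hxy⟩ :=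
    f.exists_seq_of_mem_closure_image hcl (fun n => hv.mem (n + 1)) hy
  obtain ⟨g, hg⟩ := cauchySeq_tendsto_of_complete (cauchySeq_of_succ_div_mem hv hvmul hxstep)
  have hxC : ∀ n, x n ∈ C := fun n => hN (by
    simpa [v, hx0] using
      div_mem_of_succ_div_mem hvmul (fun k => mem_of_mem_nhds (hv.mem k)) hxstep n.zero_le)
  have hfx : Tendsto (fun n => y / f (x n)) atTop (𝓝 1) := by
    simpa using hv.tendsto_of_mem_closure_image (hf.continuousAt (x := 1))
      fun n => closure_mono (image_mono (hv.antitone n.le_succ)) (hxy n)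
  refine ⟨g, hCU (hCc.mem_of_tendsto hg (Eventually.of_forall hxC)), ?_⟩
  refine tendsto_nhds_unique ((hf.tendsto g).comp hg) ?_
  simpa [Function.comp_def] using hfx.inv.mul_const y

end MonoidHom

theorem stmt1_general (G : Type u) [Group G] [TopologicalSpace G] [IsTopologicalGroup G]
    [TopologicalSpace.SeparableSpace G] [TopologicalSpace.MetrizableSpace G]
    (hc : @CompleteSpace G (IsTopologicalGroup.rightUniformSpace G))
    (H : Type u) [Group H] [TopologicalSpace H] [IsTopologicalGroup H] [T2Space H]
    [BaireSpace H]
    (f : G →* H) (hf : Continuous f) (hsurj : Function.Surjective f) :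
    IsOpenMap f := by
  let := IsTopologicalGroup.rightUniformSpace G
  have : IsRightUniformGroup G := ⟨rfl⟩
  have : FirstCountableTopology G := by
    let := metrizableSpaceMetric G
    infer_instance
  rw [IsTopologicalGroup.isOpenMap_iff_nhds_one, le_map_iff]
  exact fun U hU => f.image_mem_nhds_one_of_closure_image_mem_nhds_one hf
    (fun W hW => f.closure_image_mem_nhds_one hsurj hW) hU

/-- Banach's Open Map Theorem: a continuous surjective homomorphism from a
separable complete metrizable group onto a Baire group is open. -/
theorem stmt1 (G : Type u) [Group G] [TopologicalSpace G] [IsTopologicalGroup G] [T2Space G]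
    [TopologicalSpace.SeparableSpace G] [TopologicalSpace.MetrizableSpace G]
    (hc : @CompleteSpace G (IsTopologicalGroup.rightUniformSpace G))
    (H : Type u) [Group H] [TopologicalSpace H] [IsTopologicalGroup H] [T2Space H]
    [BaireSpace H]
    (f : G →* H) (hf : Continuous f) (hsurj : Function.Surjective f) :
    IsOpenMap f :=
  stmt1_general G hc H f hf hsurj
end

section
/- A topological group G is τ-precompact (for an infinite cardinal τ) if and only if G is topologically isomorphic to a subgroup of a direct product of topological groups each of weight at most τ (Guran's Embedding Theorem). -/
/-!
Let `G` be `τ`-precompact and `U` a neighbourhood of `1`. Closing `{U}` under symmetric "cube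
roots" `W³ ⊆ V`, binary intersections, and conjugation by the `τ` elements of a covering
`G = W · F` yields `τ` neighbourhoods of `1` forming a base at `1` of a coarser group topology.
That topology is still `τ`-precompact and has character `≤ τ`, so the translates `(int V) · f`
give it weight `≤ τ`; its Hausdorff quotient `H_U` receives a continuous homomorphism from `G`
that separates `U`, and the diagonal map into `∏_U H_U` is an embedding. Conversely, a group of
weight `≤ τ` has a dense subset of size `≤ τ` and is therefore `τ`-precompact, and
`τ`-precompactness passes to products (a basic neighbourhood restricts finitely many
coordinates) and to subgroups.
-/

open Topology Pointwise

universe u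

/-- `G` is τ-precompact. -/
def TauPrecompact (G : Type u) [Group G] [TopologicalSpace G] [IsTopologicalGroup G]
    (τ : Cardinal.{u}) : Prop :=
  ∀ U ∈ 𝓝 (1 : G), ∃ F : Set G, Cardinal.mk F ≤ τ ∧ U * F = Set.univ

open Set Filter TopologicalSpace Cardinal

section Saturation
variable {G : Type u} [Group G]

/-- The smallest family containing `U` and closed under `R`, binary intersections and
`V ↦ (f * · * f⁻¹) ⁻¹' R V` for `f ∈ F V` is built in `ω` stages to control its cardinality. -/
def saturationStage (R F : Set G → Set G) (U : Set G) : ℕ → Set (Set G)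
  | 0 => {U}
  | n + 1 =>
    saturationStage R F U n ∪ R '' saturationStage R F U n ∪
      image2 (· ∩ ·) (saturationStage R F U n) (saturationStage R F U n) ∪
      ⋃ V ∈ saturationStage R F U n, (fun f => (f * · * f⁻¹) ⁻¹' R V) '' F V

def saturation (R F : Set G → Set G) (U : Set G) : Set (Set G) :=
  ⋃ n, saturationStage R F U n

variable {R F : Set G → Set G} {U V W : Set G}

lemma saturationStage_mono : Monotone (saturationStage R F U) :=
  monotone_nat_of_le_succ fun _ _ h => Or.inl (Or.inl (Or.inl h))

lemma self_mem_saturation : U ∈ saturation R F U :=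
  mem_iUnion.2 ⟨0, rfl⟩

lemma apply_mem_saturation (hV : V ∈ saturation R F U) : R V ∈ saturation R F U := by
  obtain ⟨n, hn⟩ := mem_iUnion.1 hV
  exact mem_iUnion.2 ⟨n + 1, Or.inl (Or.inl (Or.inr (mem_image_of_mem R hn)))⟩

lemma inter_mem_saturation (hV : V ∈ saturation R F U) (hW : W ∈ saturation R F U) :
    V ∩ W ∈ saturation R F U := by
  obtain ⟨m, hm⟩ := mem_iUnion.1 hV
  obtain ⟨n, hn⟩ := mem_iUnion.1 hW
  refine mem_iUnion.2 ⟨max m n + 1, Or.inl (Or.inr (mem_image2_of_mem ?_ ?_))⟩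
  exacts [saturationStage_mono (le_max_left m n) hm, saturationStage_mono (le_max_right m n) hn]

lemma conj_preimage_mem_saturation (hV : V ∈ saturation R F U) {f : G} (hf : f ∈ F V) :
    (f * · * f⁻¹) ⁻¹' R V ∈ saturation R F U := by
  obtain ⟨n, hn⟩ := mem_iUnion.1 hV
  exact mem_iUnion.2 ⟨n + 1, Or.inr (mem_biUnion hn (mem_image_of_mem _ hf))⟩

lemma saturation_subset {S : Set (Set G)} (hU : U ∈ S) (hR : ∀ V ∈ S, R V ∈ S)
    (hinter : ∀ V ∈ S, ∀ W ∈ S, V ∩ W ∈ S)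
    (hconj : ∀ V ∈ S, ∀ f ∈ F V, (f * · * f⁻¹) ⁻¹' R V ∈ S) : saturation R F U ⊆ S := by
  refine iUnion_subset fun n => ?_
  induction n with
  | zero => exact singleton_subset_iff.2 hU
  | succ n ih =>
    refine union_subset (union_subset (union_subset ih ?_) ?_) ?_
    · rintro _ ⟨V, hV, rfl⟩
      exact hR V (ih hV)
    · rintro _ ⟨V, hV, W, hW, rfl⟩
      exact hinter V (ih hV) W (ih hW)
    · refine iUnion₂_subset fun V hV => ?_
      rintro _ ⟨f, hf, rfl⟩
      exact hconj V (ih hV) f hf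

lemma mk_saturation_le {τ : Cardinal.{u}} (hτ : ℵ₀ ≤ τ) (hF : ∀ V, #(F V) ≤ τ) :
    #(saturation R F U) ≤ τ := by
  have hstage : ∀ n, #(saturationStage R F U n) ≤ τ := by
    intro n
    induction n with
    | zero => exact (mk_singleton U).trans_le (one_le_aleph0.trans hτ)
    | succ n ih =>
      refine (mk_union_le _ _).trans (add_le_of_le hτ ?_ ?_)
      · refine (mk_union_le _ _).trans (add_le_of_le hτ ?_ ?_)
        · exact (mk_union_le _ _).trans (add_le_of_le hτ ih (mk_image_le.trans ih))
        · exact mk_image2_le.trans (mul_le_of_le hτ ih ih)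
      · exact (mk_biUnion_le _ _).trans
          (mul_le_of_le hτ ih (ciSup_le' fun V => mk_image_le.trans (hF V)))
  have := mk_iUnion_le_lift (saturationStage R F U)
  simp only [lift_uzero, mk_nat, lift_aleph0] at this
  exact this.trans (mul_le_of_le hτ hτ (ciSup_le' hstage))

end Saturation

section TopologicalGroup
variable {G : Type u} [Group G] [TopologicalSpace G] [IsTopologicalGroup G] {τ : Cardinal.{u}}

lemma exists_nhds_one_inv_eq_mul_mul_subset {V : Set G} (hV : V ∈ 𝓝 1) :
    ∃ W ∈ 𝓝 (1 : G), W⁻¹ = W ∧ W * W * W ⊆ V := by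
  obtain ⟨V₁, hV₁, -, -, hV₁V⟩ := exists_closed_nhds_one_inv_eq_mul_subset hV
  obtain ⟨W, hW, -, hWinv, hWV₁⟩ := exists_closed_nhds_one_inv_eq_mul_subset hV₁
  refine ⟨W, hW, hWinv, (mul_subset_mul hWV₁ ?_).trans hV₁V⟩
  exact (subset_mul_left W (mem_of_mem_nhds hW)).trans hWV₁

lemma conj_preimage_mem_nhds_one {V : Set G} (hV : V ∈ 𝓝 1) (f : G) :
    (f * · * f⁻¹) ⁻¹' V ∈ 𝓝 (1 : G) :=
  ((continuous_const_mul f).mul continuous_const).continuousAt.preimage_mem_nhds (by simpa using hV)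

theorem TauPrecompact.exists_groupFilterBasis (hτ : ℵ₀ ≤ τ) (hp : TauPrecompact G τ)
    {U : Set G} (hU : U ∈ 𝓝 1) :
    ∃ B : GroupFilterBasis G, #B.sets ≤ τ ∧ (∀ V ∈ B, V ∈ 𝓝 (1 : G)) ∧ U ∈ B := by
  choose! R hR hRinv hRcube using fun V (hV : V ∈ 𝓝 (1 : G)) =>
    exists_nhds_one_inv_eq_mul_mul_subset hV
  have hRmul : ∀ V ∈ 𝓝 (1 : G), R V * R V ⊆ V := fun V hV =>
    (subset_mul_left _ (mem_of_mem_nhds (hR V hV))).trans (hRcube V hV)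
  have hRsub : ∀ V ∈ 𝓝 (1 : G), R V ⊆ V := fun V hV =>
    (subset_mul_left _ (mem_of_mem_nhds (hR V hV))).trans (hRmul V hV)
  have hcov : ∀ V : Set G, ∃ F : Set G, #F ≤ τ ∧ (V ∈ 𝓝 1 → R V * F = Set.univ) := by
    intro V
    by_cases hV : V ∈ 𝓝 1
    · obtain ⟨F, hF, hRF⟩ := hp _ (hR V hV)
      exact ⟨F, hF, fun _ => hRF⟩
    · exact ⟨∅, by simp, fun h => absurd h hV⟩
  choose F hFcard hFcov using hcov
  have hnhds : saturation R F U ⊆ {V | V ∈ 𝓝 1} :=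
    saturation_subset hU hR (fun _ hV _ hW => inter_mem hV hW)
      (fun V hV f _ => conj_preimage_mem_nhds_one (hR V hV) f)
  refine ⟨{ sets := saturation R F U
            nonempty := ⟨U, self_mem_saturation⟩
            inter_sets := fun hV hW => ⟨_, inter_mem_saturation hV hW, subset_rfl⟩
            one' := fun hV => mem_of_mem_nhds (hnhds hV)
            mul' := fun hV => ⟨_, apply_mem_saturation hV, hRmul _ (hnhds hV)⟩
            inv' := fun {V} hV => ⟨_, apply_mem_saturation hV, fun x hx =>
              hRsub V (hnhds hV) (by rw [← hRinv V (hnhds hV)] at hx; exact hx)⟩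
            conj' := fun x₀ {V} hV => ?_ },
    mk_saturation_le hτ hFcard, hnhds, self_mem_saturation⟩
  have hVn : V ∈ 𝓝 (1 : G) := hnhds hV
  obtain ⟨w, hw, f, hf, rfl⟩ : x₀ ∈ R V * F V := hFcov V hVn ▸ mem_univ x₀
  refine ⟨_, conj_preimage_mem_saturation hV hf, fun x hx => hRcube V hVn ?_⟩
  have hw' : w⁻¹ ∈ R V := by rw [← hRinv V hVn] at hw; exact hw
  show w * f * x * (w * f)⁻¹ ∈ _
  rw [show w * f * x * (w * f)⁻¹ = w * (f * x * f⁻¹) * w⁻¹ by group]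
  exact mul_mem_mul (mul_mem_mul hw hx) hw'

theorem TauPrecompact.exists_isTopologicalBasis_mk_le (hτ : ℵ₀ ≤ τ) (hp : TauPrecompact G τ)
    {𝒱 : Set (Set G)} (h𝒱 : (𝓝 (1 : G)).HasBasis (· ∈ 𝒱) id) (hcard : #𝒱 ≤ τ) :
    ∃ B : Set (Set G), IsTopologicalBasis B ∧ #B ≤ τ := by
  choose! F hFcard hFcov using fun V (hV : V ∈ 𝒱) =>
    hp (interior V) (interior_mem_nhds.2 (h𝒱.mem_of_mem hV))
  refine ⟨⋃ V ∈ 𝒱, (fun f => interior V * {f}) '' F V,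
    isTopologicalBasis_of_isOpen_of_nhds ?_ ?_, ?_⟩
  · simp only [mem_iUnion₂, mem_image]
    rintro _ ⟨V, -, f, -, rfl⟩
    exact isOpen_interior.mul_right
  · intro x O hxO hO
    have hOx : (· * x) ⁻¹' O ∈ 𝓝 (1 : G) :=
      (continuous_mul_const x).continuousAt.preimage_mem_nhds (by simpa using hO.mem_nhds hxO)
    obtain ⟨N, hN, hNO⟩ := exists_nhds_split_inv hOx
    obtain ⟨V, hV, hVN⟩ := h𝒱.mem_iff.1 hN
    obtain ⟨w, hw, f, hf, hwf⟩ : ∃ w ∈ interior V, ∃ f ∈ F V, w * f = x :=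
      mem_mul.1 (hFcov V hV ▸ mem_univ x)
    refine ⟨interior V * {f}, mem_biUnion hV (mem_image_of_mem _ hf), ⟨w, hw, f, rfl, hwf⟩, ?_⟩
    rintro _ ⟨v, hv, b, hb, rfl⟩
    rw [mem_singleton_iff.1 hb]
    have hvw := hNO v (hVN (interior_subset hv)) w (hVN (interior_subset hw))
    rwa [mem_preimage, ← hwf, ← mul_assoc, div_mul_cancel] at hvw
  · exact (mk_biUnion_le _ _).trans
      (mul_le_of_le hτ hcard (ciSup_le' fun V => mk_image_le.trans (hFcard V V.2)))

theorem GroupFilterBasis.exists_monoidHom_weight_le {K : Type u} [Group K]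
    (B : GroupFilterBasis K) (hτ : ℵ₀ ≤ τ) (hcard : #B.sets ≤ τ)
    (hcov : ∀ V ∈ B, ∃ F : Set K, #F ≤ τ ∧ V * F = Set.univ) :
    ∃ (H : Type u) (_ : Group H) (_ : TopologicalSpace H) (_ : IsTopologicalGroup H)
      (_ : T2Space H), (∃ 𝓑 : Set (Set H), IsTopologicalBasis 𝓑 ∧ #𝓑 ≤ τ) ∧
      ∃ φ : K →* H, Continuous[B.topology, _] φ ∧ ∀ V ∈ B, ∃ W ∈ 𝓝 (1 : H), φ ⁻¹' W ⊆ V := by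
  let := B.topology
  have hp : TauPrecompact K τ := fun U hU => by
    obtain ⟨V, hV, hVU⟩ := B.nhds_one_hasBasis.mem_iff.1 hU
    obtain ⟨F, hF, hVF⟩ := hcov V hV
    exact ⟨F, hF, eq_univ_of_univ_subset (hVF ▸ mul_subset_mul_right hVU)⟩
  obtain ⟨𝓑, h𝓑, h𝓑card⟩ := hp.exists_isTopologicalBasis_mk_le hτ B.nhds_one_hasBasis hcard
  refine ⟨SeparationQuotient K, inferInstance, inferInstance, inferInstance, inferInstance,
    ⟨_, h𝓑.isQuotientMap SeparationQuotient.isQuotientMap_mk SeparationQuotient.isOpenMap_mk,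
      mk_image_le.trans h𝓑card⟩,
    SeparationQuotient.mkMonoidHom, SeparationQuotient.continuous_mk, fun V hV => ?_⟩
  have h1V : (1 : K) ∈ interior V := mem_interior_iff_mem_nhds.2 (B.mem_nhds_one hV)
  refine ⟨SeparationQuotient.mk '' interior V,
    (SeparationQuotient.isOpenMap_mk _ isOpen_interior).mem_nhds ⟨1, h1V, rfl⟩, ?_⟩
  show SeparationQuotient.mk ⁻¹' _ ⊆ V
  rw [SeparationQuotient.preimage_image_mk_open isOpen_interior]
  exact interior_subset

theorem TauPrecompact.exists_monoidHom_weight_le (hτ : ℵ₀ ≤ τ) (hp : TauPrecompact G τ)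
    {U : Set G} (hU : U ∈ 𝓝 1) :
    ∃ (H : Type u) (_ : Group H) (_ : TopologicalSpace H) (_ : IsTopologicalGroup H)
      (_ : T2Space H), (∃ 𝓑 : Set (Set H), IsTopologicalBasis 𝓑 ∧ #𝓑 ≤ τ) ∧
      ∃ φ : G →* H, Continuous φ ∧ ∃ W ∈ 𝓝 (1 : H), φ ⁻¹' W ⊆ U := by
  obtain ⟨B, hcard, hnhds, hUB⟩ := hp.exists_groupFilterBasis hτ hU
  obtain ⟨H, iG, iT, iTG, iT2, h𝓑, φ, hφ, hφB⟩ :=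
    B.exists_monoidHom_weight_le hτ hcard fun V hV => hp V (hnhds V hV)
  have hle : ‹TopologicalSpace G› ≤ B.topology := by
    refine le_of_nhds_le_nhds fun x => (B.nhds_hasBasis x).ge_iff.2 fun V hV => ?_
    rw [← map_mul_left_nhds_one x]
    exact image_mem_map (hnhds V hV)
  exact ⟨H, iG, iT, iTG, iT2, h𝓑, φ, continuous_le_dom hle hφ, hφB U hUB⟩

theorem isEmbedding_pi_monoidHom [T0Space G] {ι : Type*} {H : ι → Type*}
    [∀ i, Group (H i)] [∀ i, TopologicalSpace (H i)] [∀ i, IsTopologicalGroup (H i)]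
    {φ : ∀ i, G →* H i} (hφ : ∀ i, Continuous (φ i))
    (hφU : ∀ U ∈ 𝓝 (1 : G), ∃ i, ∃ W ∈ 𝓝 (1 : H i), φ i ⁻¹' W ⊆ U) :
    IsEmbedding (MonoidHom.pi φ) := by
  refine IsInducing.isEmbedding (IsTopologicalGroup.isInducing_iff_nhds_one.2 (le_antisymm ?_ ?_))
  · have hc : Continuous (MonoidHom.pi φ) := continuous_pi hφ
    simpa only [map_one] using (hc.tendsto 1).le_comap
  · intro U hU
    obtain ⟨i, W, hW, hWU⟩ := hφU U hU
    exact mem_comap.2 ⟨(· i) ⁻¹' W, (continuous_apply i).continuousAt.preimage_mem_nhds hW, hWU⟩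

lemma Dense.tauPrecompact {D : Set G} (hD : Dense D) (hcard : #D ≤ τ) : TauPrecompact G τ := by
  refine fun U hU => ⟨D, hcard, eq_univ_of_univ_subset ?_⟩
  rw [← mul_univ_of_one_mem (mem_interior_iff_mem_nhds.2 hU), ← hD.closure_eq,
    isOpen_interior.mul_closure]
  exact mul_subset_mul_right interior_subset

lemma TauPrecompact.of_isInducing {P : Type u} [Group P] [TopologicalSpace P]
    [IsTopologicalGroup P] (hP : TauPrecompact P τ) (f : G →* P) (hf : IsInducing f) :
    TauPrecompact G τ := by
  intro U hU
  rw [IsTopologicalGroup.isInducing_iff_nhds_one.1 hf] at hU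
  obtain ⟨W₀, hW₀, hW₀U⟩ := mem_comap.1 hU
  obtain ⟨W, hW, hWW₀⟩ := exists_nhds_split_inv hW₀
  obtain ⟨FP, hFP, hcov⟩ := hP W hW
  let S : Set P := {p ∈ FP | ∃ g, f g ∈ W * {p}}
  refine ⟨range fun p : S => p.2.2.choose,
    mk_range_le.trans ((mk_subtype_mono fun _ h => h.1).trans hFP), eq_univ_of_forall fun g => ?_⟩
  obtain ⟨w, hw, p, hp, hwp⟩ := mem_mul.1 (hcov ▸ mem_univ (f g))
  let q : S := ⟨p, hp, g, w, hw, p, rfl, hwp⟩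
  obtain ⟨w', hw', _, rfl, hw'p⟩ := mem_mul.1 q.2.2.choose_spec
  refine ⟨g * q.2.2.choose⁻¹, hW₀U ?_, _, mem_range_self q, inv_mul_cancel_right _ _⟩
  have hfg : f (g * q.2.2.choose⁻¹) = w / w' := by
    rw [map_mul, map_inv, ← hwp, ← hw'p, div_eq_mul_inv]
    group
  rw [mem_preimage, hfg]
  exact hWW₀ w hw w' hw'

end TopologicalGroup

lemma TopologicalSpace.IsTopologicalBasis.exists_dense_mk_le {X : Type u} [TopologicalSpace X]
    {B : Set (Set X)} (hB : IsTopologicalBasis B) : ∃ D : Set X, Dense D ∧ #D ≤ #B := by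
  refine ⟨range fun b : {b | b ∈ B ∧ b.Nonempty} => b.2.2.some, ?_,
    mk_range_le.trans (mk_subtype_mono fun _ h => h.1)⟩
  refine dense_iff_inter_open.2 fun U hU ⟨x, hx⟩ => ?_
  obtain ⟨b, hbB, hxb, hbU⟩ := hB.exists_subset_of_mem_open hx hU
  let b' : {b | b ∈ B ∧ b.Nonempty} := ⟨b, hbB, x, hxb⟩
  exact ⟨_, hbU b'.2.2.some_mem, mem_range_self b'⟩

lemma tauPrecompact_pi {ι : Type u} {H : ι → Type u} [∀ i, Group (H i)]
    [∀ i, TopologicalSpace (H i)] [∀ i, IsTopologicalGroup (H i)] {τ : Cardinal.{u}}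
    (hτ : ℵ₀ ≤ τ) (h : ∀ i, TauPrecompact (H i) τ) : TauPrecompact (∀ i, H i) τ := by
  classical
  intro U hU
  rw [nhds_pi] at hU
  obtain ⟨I, hI, V, hV, hVU⟩ := Filter.mem_pi.1 hU
  choose F hFcard hFcov using fun i => h i (V i) (hV i)
  let extend : (∀ i : I, F i) → ∀ i, H i := fun x i => if hi : i ∈ I then x ⟨i, hi⟩ else 1
  refine ⟨range extend, ?_, eq_univ_of_forall fun g => ?_⟩
  · have := hI.to_subtype
    calc #(range extend) ≤ #(∀ i : I, F i) := mk_range_le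
      _ = prod fun i : I => #(F i) := mk_pi _
      _ ≤ prod fun _ : I => τ := prod_le_prod _ _ fun i => hFcard i
      _ = τ ^ #I := prod_const' _ _
      _ ≤ τ := pow_le hτ (lt_aleph0_of_finite I)
  · choose v hv f hf hvf using fun i => mem_mul.1 (hFcov i ▸ mem_univ (g i))
    refine ⟨g * (extend fun i => ⟨f i, hf i⟩)⁻¹, hVU fun i hi => ?_,
      extend fun i => ⟨f i, hf i⟩, ⟨fun i => ⟨f i, hf i⟩, rfl⟩, inv_mul_cancel_right _ _⟩
    simpa [extend, hi, ← hvf i] using hv i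

/-- Guran's Embedding Theorem: a group is τ-precompact iff it embeds into a
product of topological groups of weight at most τ. -/
theorem stmt2 (G : Type u) [Group G] [TopologicalSpace G] [IsTopologicalGroup G] [T2Space G]
    (τ : Cardinal.{u}) (hτ : Cardinal.aleph0 ≤ τ) :
    TauPrecompact G τ ↔
      ∃ (ι : Type u) (H : ι → Type u) (_ : ∀ i, Group (H i))
        (_ : ∀ i, TopologicalSpace (H i)) (_ : ∀ i, IsTopologicalGroup (H i))
        (_ : ∀ i, T2Space (H i)),
        (∀ i, ∃ B : Set (Set (H i)),
          TopologicalSpace.IsTopologicalBasis B ∧ Cardinal.mk B ≤ τ) ∧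
        ∃ f : G →* (∀ i, H i), Topology.IsEmbedding f := by
  constructor
  · intro hp
    choose H iG iT iTG iT2 h𝓑 φ hφ hφU using
      fun U : {U : Set G // U ∈ 𝓝 (1 : G)} => hp.exists_monoidHom_weight_le hτ U.2
    exact ⟨_, H, iG, iT, iTG, iT2, h𝓑, _,
      isEmbedding_pi_monoidHom hφ fun U hU => ⟨⟨U, hU⟩, hφU ⟨U, hU⟩⟩⟩
  · rintro ⟨ι, H, _, _, _, _, h𝓑, f, hf⟩
    have hH : ∀ i, TauPrecompact (H i) τ := fun i => by
      obtain ⟨B, hB, hBcard⟩ := h𝓑 i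
      obtain ⟨D, hD, hDcard⟩ := hB.exists_dense_mk_le
      exact hD.tauPrecompact (hDcard.trans hBcard)
    exact (tauPrecompact_pi hτ hH).of_isInducing f hf.isInducing
end

section
/- Every ω-precompact Hausdorff topological group of countable pseudocharacter admits a coarser second countable Hausdorff group topology. -/
/-!
For a neighbourhood `U` of `1` in an ω-precompact group, countably many neighbourhoods `W` of `1`
already give `x W x⁻¹ ⊆ U` for every `x`: write `x = v f` with `f` in a countable set `F` and `v`
close to `1`. Closing the countably many open sets `s n` with `⋂ s n = {1}` under this operation
(and under `U ↦ U⁻¹` and a choice of `V` with `V V ⊆ U`) yields a countable family `C` of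
neighbourhoods of `1` that generates the neighbourhood filter of `1` of a coarser group topology.
It is Hausdorff since `⋂ C = {1}` and first countable since `C` is countable; being coarser, it is
still ω-precompact, hence separable, and a first countable separable group is second countable.
-/

open Topology Pointwise

universe u

open Filter Set

theorem Set.exists_countable_closure {α : Type*} {P S : Set α} (hS : S.Countable) (hSP : S ⊆ P)
    (f : α → Set α) (hf : ∀ a ∈ P, (f a).Countable ∧ f a ⊆ P) :
    ∃ C, S ⊆ C ∧ C ⊆ P ∧ C.Countable ∧ ∀ a ∈ C, f a ⊆ C := by
  set step : Set α → Set α := fun T ↦ ⋃ a ∈ T, f a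
  have hstep : ∀ n, step^[n] S ⊆ P ∧ (step^[n] S).Countable := by
    intro n
    induction n with
    | zero => exact ⟨hSP, hS⟩
    | succ n ih =>
      rw [Function.iterate_succ_apply']
      exact ⟨iUnion₂_subset fun a ha ↦ (hf a (ih.1 ha)).2,
        ih.2.biUnion fun a ha ↦ (hf a (ih.1 ha)).1⟩
  refine ⟨⋃ n, step^[n] S, subset_iUnion (fun n ↦ step^[n] S) 0,
    iUnion_subset fun n ↦ (hstep n).1, countable_iUnion fun n ↦ (hstep n).2, fun a ha ↦ ?_⟩
  obtain ⟨n, hn⟩ := mem_iUnion.1 ha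
  calc f a ⊆ step (step^[n] S) := subset_biUnion_of_mem (u := f) hn
    _ = step^[n + 1] S := (Function.iterate_succ_apply' step n S).symm
    _ ⊆ ⋃ n, step^[n] S := subset_iUnion (fun n ↦ step^[n] S) (n + 1)

section GroupFilter

variable {G : Type*} [Group G]

@[reducible]
def GroupFilterBasis.ofFilter (𝓕 : Filter G) (one : pure 1 ≤ 𝓕) (mul : 𝓕 * 𝓕 ≤ 𝓕)
    (inv : 𝓕⁻¹ ≤ 𝓕) (conj : ∀ x : G, map (fun y ↦ x * y * x⁻¹) 𝓕 ≤ 𝓕) :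
    GroupFilterBasis G where
  sets := 𝓕.sets
  nonempty := ⟨univ, univ_mem⟩
  inter_sets hU hV := ⟨_, inter_mem hU hV, subset_rfl⟩
  one' hU := one hU
  mul' hU := by
    obtain ⟨A, hA, B, hB, hAB⟩ := mem_mul.1 (mul hU)
    exact ⟨A ∩ B, inter_mem hA hB,
      (Set.mul_subset_mul inter_subset_left inter_subset_right).trans hAB⟩
  inv' hU := ⟨_, inv hU, subset_rfl⟩
  conj' x _ hU := ⟨_, conj x hU, subset_rfl⟩

theorem GroupFilterBasis.nhds_one_ofFilter (𝓕 : Filter G) (one mul inv conj) :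
    @nhds G (ofFilter 𝓕 one mul inv conj).topology 1 = 𝓕 := by
  rw [nhds_one_eq]
  ext U
  exact ⟨fun ⟨V, hV, hVU⟩ ↦ mem_of_superset hV hVU, fun hU ↦ ⟨U, hU, subset_rfl⟩⟩

/-- The axioms of `GroupFilterBasis` at `U` with witnesses in `𝒲`, except closure under
intersections, which `Filter.generate` supplies. -/
def GroupBasisAxiomsAt (𝒲 : Set (Set G)) (U : Set G) : Prop :=
  (1 : G) ∈ U ∧ (∃ V ∈ 𝒲, V * V ⊆ U) ∧ (∃ V ∈ 𝒲, V ⊆ (fun x ↦ x⁻¹) ⁻¹' U) ∧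
    ∀ x : G, ∃ V ∈ 𝒲, V ⊆ (fun y ↦ x * y * x⁻¹) ⁻¹' U

theorem GroupBasisAxiomsAt.mono {𝒲 𝒲' : Set (Set G)} {U : Set G} (h : GroupBasisAxiomsAt 𝒲 U)
    (h𝒲 : 𝒲 ⊆ 𝒲') : GroupBasisAxiomsAt 𝒲' U := by
  obtain ⟨h1, ⟨V, hV, hVU⟩, ⟨W, hW, hWU⟩, hconj⟩ := h
  refine ⟨h1, ⟨V, h𝒲 hV, hVU⟩, ⟨W, h𝒲 hW, hWU⟩, fun x ↦ ?_⟩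
  obtain ⟨V, hV, hVU⟩ := hconj x
  exact ⟨V, h𝒲 hV, hVU⟩

theorem exists_isTopologicalGroup_nhds_one_eq_generate (C : Set (Set G))
    (hC : ∀ U ∈ C, GroupBasisAxiomsAt C U) :
    ∃ t : TopologicalSpace G, @IsTopologicalGroup G t _ ∧ @nhds G t 1 = generate C := by
  have one : pure 1 ≤ generate C := le_generate_iff.2 fun U hU ↦ (hC U hU).1
  have mul : generate C * generate C ≤ generate C := le_generate_iff.2 fun U hU ↦ by
    obtain ⟨V, hV, hVU⟩ := (hC U hU).2.1
    exact mem_mul.2 ⟨V, mem_generate_of_mem hV, V, mem_generate_of_mem hV, hVU⟩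
  have inv : (generate C)⁻¹ ≤ generate C := le_generate_iff.2 fun U hU ↦ by
    obtain ⟨V, hV, hVU⟩ := (hC U hU).2.2.1
    exact Filter.mem_inv.2 (mem_of_superset (mem_generate_of_mem hV) hVU)
  have conj : ∀ x : G, map (fun y ↦ x * y * x⁻¹) (generate C) ≤ generate C :=
    fun x ↦ le_generate_iff.2 fun U hU ↦ by
      obtain ⟨V, hV, hVU⟩ := (hC U hU).2.2.2 x
      exact mem_map.2 (mem_of_superset (mem_generate_of_mem hV) hVU)
  let B := GroupFilterBasis.ofFilter (generate C) one mul inv conj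
  exact ⟨B.topology, B.isTopologicalGroup, GroupFilterBasis.nhds_one_ofFilter _ _ _ _ _⟩

end GroupFilter

theorem le_of_nhds_one_le {G : Type*} [Group G] {t t' : TopologicalSpace G}
    [@IsTopologicalGroup G t _] [@IsTopologicalGroup G t' _]
    (h : @nhds G t 1 ≤ @nhds G t' 1) : t ≤ t' :=
  le_of_nhds_le_nhds fun x ↦ by
    rw [← @map_mul_left_nhds_one G t _ _ x, ← @map_mul_left_nhds_one G t' _ _ x]
    exact map_mono h

theorem OmegaPrecompact.mono {G : Type*} [Group G] {t t' : TopologicalSpace G}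
    (hω : @OmegaPrecompact G _ t) (h : t ≤ t') : @OmegaPrecompact G _ t' :=
  fun U hU ↦ hω U (nhds_mono h hU)

section OmegaPrecompact

variable {G : Type*} [Group G] [TopologicalSpace G] [IsTopologicalGroup G]

theorem OmegaPrecompact.exists_countable_conj_subset (hω : OmegaPrecompact G) {U : Set G}
    (hU : U ∈ 𝓝 (1 : G)) :
    ∃ 𝒲 : Set (Set G), 𝒲.Countable ∧ (∀ W ∈ 𝒲, W ∈ 𝓝 (1 : G)) ∧
      ∀ x : G, ∃ W ∈ 𝒲, W ⊆ (fun y ↦ x * y * x⁻¹) ⁻¹' U := by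
  have hcont : Continuous fun p : G × G ↦ p.1 * p.2 * p.1⁻¹ := by fun_prop
  have hU' : (fun p : G × G ↦ p.1 * p.2 * p.1⁻¹) ⁻¹' U ∈ 𝓝 (1, 1) :=
    hcont.continuousAt.preimage_mem_nhds (by simpa using hU)
  obtain ⟨V, hV, B, hB, hVB⟩ := mem_nhds_prod_iff.1 hU'
  obtain ⟨F, hF, hVF⟩ := hω V hV
  have hconjB : ∀ f : G, (fun y ↦ f * y * f⁻¹) ⁻¹' B ∈ 𝓝 (1 : G) := fun f ↦
    (by fun_prop : Continuous fun y : G ↦ f * y * f⁻¹).continuousAt.preimage_mem_nhds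
      (by simpa using hB)
  refine ⟨(fun f ↦ (fun y ↦ f * y * f⁻¹) ⁻¹' B) '' F, hF.image _, by simpa using fun f _ ↦ hconjB f,
    fun x ↦ ?_⟩
  -- conjugating by `x = v * f` is conjugating by `f` into `B`, then by `v ∈ V`
  obtain ⟨v, hv, f, hf, rfl⟩ : x ∈ V * F := hVF ▸ mem_univ x
  refine ⟨_, mem_image_of_mem _ hf, fun y hy ↦ ?_⟩
  have := hVB (mk_mem_prod hv hy)
  simp only [mem_preimage, mul_inv_rev] at this ⊢
  simpa [mul_assoc] using this

theorem OmegaPrecompact.exists_countable_groupBasisAxiomsAt (hω : OmegaPrecompact G)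
    {U : Set G} (hU : U ∈ 𝓝 (1 : G)) :
    ∃ 𝒲 : Set (Set G), 𝒲.Countable ∧ (∀ W ∈ 𝒲, W ∈ 𝓝 (1 : G)) ∧ GroupBasisAxiomsAt 𝒲 U := by
  obtain ⟨V, hVo, hV1, hVU⟩ := exists_open_nhds_one_mul_subset hU
  obtain ⟨𝒲, h𝒲c, h𝒲, hconj⟩ := hω.exists_countable_conj_subset hU
  refine ⟨insert V (insert U⁻¹ 𝒲), (h𝒲c.insert _).insert _, ?_,
    mem_of_mem_nhds hU, ⟨V, mem_insert _ _, hVU⟩,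
    ⟨U⁻¹, mem_insert_of_mem _ (mem_insert _ _), subset_rfl⟩,
    fun x ↦ ?_⟩
  · rintro W (rfl | rfl | hW)
    exacts [hVo.mem_nhds hV1, inv_mem_nhds_one G hU, h𝒲 W hW]
  · obtain ⟨W, hW, hWU⟩ := hconj x
    exact ⟨W, mem_insert_of_mem _ (mem_insert_of_mem _ hW), hWU⟩

theorem OmegaPrecompact.separableSpace [(𝓝 (1 : G)).IsCountablyGenerated]
    (hω : OmegaPrecompact G) : TopologicalSpace.SeparableSpace G := by
  obtain ⟨u, hu⟩ := (𝓝 (1 : G)).exists_antitone_basis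
  choose F hF hUF using fun n ↦ hω (u n) (hu.mem n)
  refine ⟨⋃ n, F n, countable_iUnion hF, fun x ↦ mem_closure_iff_nhds.2 fun W hW ↦ ?_⟩
  have hW' : (fun a ↦ a⁻¹ * x) ⁻¹' W ∈ 𝓝 (1 : G) :=
    (by fun_prop : Continuous fun a : G ↦ a⁻¹ * x).continuousAt.preimage_mem_nhds
      (by simpa using hW)
  obtain ⟨n, -, hn⟩ := hu.toHasBasis.mem_iff.1 hW'
  obtain ⟨a, ha, f, hf, rfl⟩ : x ∈ u n * F n := hUF n ▸ mem_univ x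
  exact ⟨f, by simpa using hn ha, mem_iUnion_of_mem n hf⟩

theorem OmegaPrecompact.secondCountableTopology [(𝓝 (1 : G)).IsCountablyGenerated]
    (hω : OmegaPrecompact G) : SecondCountableTopology G := by
  have := hω.separableSpace
  let := IsTopologicalGroup.rightUniformSpace G
  have : (uniformity G).IsCountablyGenerated := by
    rw [uniformity_eq_comap_nhds_one' G]
    infer_instance
  exact UniformSpace.secondCountable_of_separable G

end OmegaPrecompact

theorem stmt3_general (G : Type u) [Group G] [t : TopologicalSpace G] [IsTopologicalGroup G]
    (hω : OmegaPrecompact G) (hψ : CountablePseudocharacter G) :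
    ∃ t' : TopologicalSpace G, t ≤ t' ∧ @IsTopologicalGroup G t' _ ∧ @T2Space G t' ∧
      @SecondCountableTopology G t' := by
  obtain ⟨s, hs_open, hs_inter⟩ := hψ
  have hs_one : (1 : G) ∈ ⋂ n, s n := hs_inter ▸ mem_singleton 1
  have hs_nhds : ∀ n, s n ∈ 𝓝 (1 : G) := fun n ↦ (hs_open n).mem_nhds (mem_iInter.1 hs_one n)
  choose! Φ hΦc hΦ𝓝 hΦ using fun U (hU : U ∈ 𝓝 (1 : G)) ↦
    hω.exists_countable_groupBasisAxiomsAt hU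
  obtain ⟨C, hsC, hC𝓝, hCc, hCΦ⟩ := exists_countable_closure (countable_range s)
    (range_subset_iff.2 hs_nhds) Φ fun U hU ↦ ⟨hΦc U hU, hΦ𝓝 U hU⟩
  obtain ⟨t', ht'G, ht'1⟩ := exists_isTopologicalGroup_nhds_one_eq_generate C
    fun U hU ↦ (hΦ U (hC𝓝 hU)).mono (hCΦ U hU)
  have hcoarser : t ≤ t' := le_of_nhds_one_le (ht'1 ▸ le_generate_iff.2 hC𝓝)
  refine ⟨t', hcoarser, ht'G, @IsTopologicalGroup.t2Space_of_one_sep G t' _ ht'G fun x hx ↦ ?_,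
    @OmegaPrecompact.secondCountableTopology G _ t' ht'G (ht'1 ▸ ⟨C, hCc, rfl⟩)
      (hω.mono hcoarser)⟩
  obtain ⟨n, hn⟩ : ∃ n, x ∉ s n := by
    by_contra! h
    exact hx (by simpa [hs_inter] using mem_iInter.2 h)
  exact ⟨s n, ht'1 ▸ mem_generate_of_mem (hsC (mem_range_self n)), hn⟩

/-- Every ω-precompact Hausdorff group of countable pseudocharacter admits a
coarser second countable Hausdorff group topology. -/
theorem stmt3 (G : Type u) [Group G] [t : TopologicalSpace G] [IsTopologicalGroup G] [T2Space G]
    (hω : OmegaPrecompact G) (hψ : CountablePseudocharacter G) :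
    ∃ t' : TopologicalSpace G, t ≤ t' ∧ @IsTopologicalGroup G t' _ ∧ @T2Space G t' ∧
      @SecondCountableTopology G t' :=
  stmt3_general G (t := t) hω hψ
end
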